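/- Suppose uₖ, vₖ : Ω → ℝ are measurable, 0 ≤ uₖ ≤ U₀, 0 ≤ vₖ ≤ V₀, uₖ → u and vₖ → v almost everywhere on a finite measure space Ω, and there is a constant C with ∫_Ω k·uₖ·vₖ dμ ≤ C for all k > 0. Then u·v = 0 almost everywhere on Ω. -/

import Mathlib

/-!
Let `F k = uₖ vₖ ≥ 0`. The bound on the reaction integrals gives `∫ F k ≤ C / k → 0`, while
`F k → u v` almost everywhere. By Fatou's lemma, `∫ |u v| ≤ liminf ∫ F k = 0`, so `u v = 0`
almost everywhere.
-/

open MeasureTheory Filter Topology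

section

variable {Ω ι E : Type*} [MeasurableSpace Ω] {μ : Measure Ω} [NormedAddCommGroup E]
  [MeasurableSpace E] [BorelSpace E]

theorem ae_eq_zero_of_tendsto_ae_of_tendsto_lintegral_enorm {L : Filter ι} [L.NeBot]
    [L.IsCountablyGenerated] {f : ι → Ω → E} {g : Ω → E} (hf : ∀ i, AEMeasurable (f i) μ)
    (hlim : ∀ᵐ x ∂μ, Tendsto (fun i => f i x) L (𝓝 (g x)))
    (hnorm : Tendsto (fun i => ∫⁻ x, ‖f i x‖ₑ ∂μ) L (𝓝 0)) :
    g =ᵐ[μ] 0 := by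
  have hg : AEMeasurable g μ := aemeasurable_of_tendsto_metrizable_ae L hf hlim
  have hg_lintegral : ∫⁻ x, ‖g x‖ₑ ∂μ = 0 := by
    refine le_antisymm ?_ bot_le
    calc ∫⁻ x, ‖g x‖ₑ ∂μ = ∫⁻ x, liminf (fun i => ‖f i x‖ₑ) L ∂μ := by
          refine lintegral_congr_ae ?_
          filter_upwards [hlim] with x hx
          exact hx.enorm.liminf_eq.symm
      _ ≤ liminf (fun i => ∫⁻ x, ‖f i x‖ₑ ∂μ) L :=
          lintegral_liminf_le' fun i => (hf i).enorm
      _ = 0 := hnorm.liminf_eq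
  filter_upwards [(lintegral_eq_zero_iff' hg.enorm).mp hg_lintegral] with x hx
  simpa using hx

end

theorem tendsto_zero_of_nonneg_of_mul_le {a : ℝ → ℝ} {C : ℝ}
    (h_nonneg : ∀ k > 0, 0 ≤ a k) (h_le : ∀ k > 0, k * a k ≤ C) :
    Tendsto a atTop (𝓝 0) := by
  have h_upper : ∀ᶠ k in atTop, a k ≤ C / k := by
    filter_upwards [eventually_gt_atTop 0] with k hk
    rw [le_div_iff₀ hk, mul_comm]
    exact h_le k hk
  exact tendsto_of_tendsto_of_tendsto_of_le_of_le' tendsto_const_nhds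
    (tendsto_const_nhds.div_atTop tendsto_id)
    ((eventually_gt_atTop 0).mono h_nonneg) h_upper

theorem stmt_12_general {Ω : Type*} [MeasurableSpace Ω] (μ : Measure Ω) [IsFiniteMeasure μ]
    (U₀ V₀ C : ℝ)
    (u v : ℝ → Ω → ℝ) (ulim vlim : Ω → ℝ)
    (humeas : ∀ k, Measurable (u k)) (hvmeas : ∀ k, Measurable (v k))
    (hub : ∀ k > (0:ℝ), ∀ x, u k x ∈ Set.Icc (0:ℝ) U₀)
    (hvb : ∀ k > (0:ℝ), ∀ x, v k x ∈ Set.Icc (0:ℝ) V₀)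
    (huconv : ∀ᵐ x ∂μ, Filter.Tendsto (fun k => u k x) Filter.atTop (nhds (ulim x)))
    (hvconv : ∀ᵐ x ∂μ, Filter.Tendsto (fun k => v k x) Filter.atTop (nhds (vlim x)))
    (hbound : ∀ k > (0:ℝ), ∫ x, k * u k x * v k x ∂μ ≤ C) :
    ∀ᵐ x ∂μ, ulim x * vlim x = 0 := by
  have h_nonneg : ∀ k > (0:ℝ), ∀ x, 0 ≤ u k x * v k x := fun k hk x =>
    mul_nonneg (hub k hk x).1 (hvb k hk x).1
  have h_int : ∀ k > (0:ℝ), Integrable (fun x => u k x * v k x) μ := fun k hk =>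
    .of_bound ((humeas k).mul (hvmeas k)).aestronglyMeasurable (U₀ * V₀) <| ae_of_all _ fun x => by
      obtain ⟨hu₀, hu₁⟩ := hub k hk x
      obtain ⟨hv₀, hv₁⟩ := hvb k hk x
      rw [Real.norm_of_nonneg (mul_nonneg hu₀ hv₀)]
      exact mul_le_mul hu₁ hv₁ hv₀ (hu₀.trans hu₁)
  have h_integral : Tendsto (fun k => ∫ x, u k x * v k x ∂μ) atTop (𝓝 0) := by
    refine tendsto_zero_of_nonneg_of_mul_le (C := C)
      (fun k hk => integral_nonneg (h_nonneg k hk)) fun k hk => ?_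
    simpa only [← integral_const_mul, mul_assoc] using hbound k hk
  refine ae_eq_zero_of_tendsto_ae_of_tendsto_lintegral_enorm (L := atTop)
    (f := fun k x => u k x * v k x)
    (fun k => ((humeas k).mul (hvmeas k)).aemeasurable) ?_ ?_
  · filter_upwards [huconv, hvconv] with x hu hv using hu.mul hv
  · rw [← ENNReal.ofReal_zero]
    refine (ENNReal.tendsto_ofReal h_integral).congr' ?_
    filter_upwards [eventually_gt_atTop 0] with k hk
    rw [← ofReal_integral_norm_eq_lintegral_enorm (h_int k hk)]
    simp only [Real.norm_of_nonneg (h_nonneg k hk _)]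

theorem stmt_12 {Ω : Type*} [MeasurableSpace Ω] (μ : Measure Ω) [IsFiniteMeasure μ]
    (U₀ V₀ C : ℝ) (hU₀ : 0 < U₀) (hV₀ : 0 < V₀) (hC : 0 < C)
    (u v : ℝ → Ω → ℝ) (ulim vlim : Ω → ℝ)
    (humeas : ∀ k, Measurable (u k)) (hvmeas : ∀ k, Measurable (v k))
    (hub : ∀ k > (0:ℝ), ∀ x, u k x ∈ Set.Icc (0:ℝ) U₀)
    (hvb : ∀ k > (0:ℝ), ∀ x, v k x ∈ Set.Icc (0:ℝ) V₀)
    (huconv : ∀ᵐ x ∂μ, Filter.Tendsto (fun k => u k x) Filter.atTop (nhds (ulim x)))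
    (hvconv : ∀ᵐ x ∂μ, Filter.Tendsto (fun k => v k x) Filter.atTop (nhds (vlim x)))
    (hbound : ∀ k > (0:ℝ), ∫ x, k * u k x * v k x ∂μ ≤ C) :
    ∀ᵐ x ∂μ, ulim x * vlim x = 0 :=
  stmt_12_general μ U₀ V₀ C u v ulim vlim humeas hvmeas hub hvb huconv hvconv hbound
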